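/- Along a critical trajectory (one with p₀ = 0), the Pontryagin condition H = 0 reads p₁ x₂ + p₂(-μ h(x₁) x₂ - V'(x₁) + F) = 0 for all t; at a switching time t_s where p₂(t_s) = 0, this forces p₁(t_s) x₂(t_s) = 0, and since p₁(t_s) ≠ 0 (by nontriviality together with p₂(t_s) = 0 and p₀ = 0), it follows that x₂(t_s) = 0, i.e. switching points of critical trajectories lie on the x₁-axis. -/
import Mathlib

/-- Along a critical trajectory (p₀ = 0, so H = 0 reads
p₁x₂ + p₂(-μh x₂ - V' + F) = 0), at a switching time t_s with p₂(t_s) = 0 and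
nontriviality (p₁(t_s),p₂(t_s)) ≠ (0,0), one has x₂(t_s) = 0. -/
theorem critical_switching_on_axis (μ tf ts : ℝ) (h Vp : ℝ → ℝ)
    (x₁ x₂ p₁ p₂ F : ℝ → ℝ)
    (hH : ∀ t ∈ Set.Icc 0 tf,
      p₁ t * x₂ t + p₂ t * (-μ * h (x₁ t) * x₂ t - Vp (x₁ t) + F t) = 0)
    (hnontriv : ∀ t ∈ Set.Icc 0 tf, (p₁ t, p₂ t) ≠ (0, 0))
    (hts : ts ∈ Set.Icc 0 tf) (hp₂ : p₂ ts = 0) :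
    x₂ ts = 0 := by
  have hH' := hH ts hts
  rw [hp₂] at hH'
  simp at hH'
  have hp₁ : p₁ ts ≠ 0 := by
    intro h0
    exact hnontriv ts hts (by simp [h0, hp₂])
  rcases hH' with h1 | h2
  · exact absurd h1 hp₁
  · exact h2
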